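/- A reflexive real Banach lattice E has the (d)-DP property if and only if E is finite dimensional. -/

import Mathlib

open Filter Topology Metric Bornology ZeroAtInfty NormedSpace

/-- A sequence in a normed space is weakly null if it converges to zero in the weak topology,
i.e. `f (x n) → 0` for every continuous linear functional `f`. -/
def WeaklyNull {X : Type*} [NormedAddCommGroup X] [NormedSpace ℝ X] (x : ℕ → X) : Prop :=
  ∀ f : X →L[ℝ] ℝ, Tendsto (fun n => f (x n)) atTop (𝓝 0)

/-- A sequence in a Banach lattice is disjoint if `|x m| ⊓ |x n| = 0` for `m ≠ n`. -/
def DisjointSeq {E : Type*} [NormedAddCommGroup E] [Lattice E] [IsOrderedAddMonoid E] [HasSolidNorm E] (x : ℕ → E) : Prop :=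
  ∀ m n, m ≠ n → |x m| ⊓ |x n| = 0

/-- The solid hull of a set in a Banach lattice. -/
def SolidHull {E : Type*} [NormedAddCommGroup E] [Lattice E] [IsOrderedAddMonoid E] [HasSolidNorm E] (A : Set E) : Set E :=
  {y | ∃ x ∈ A, |y| ≤ |x|}

/-- A norm bounded set `A` is disjointly weakly compact if every disjoint sequence in the
solid hull of `A` is weakly null. -/
def DisjointlyWeaklyCompact {E : Type*} [NormedAddCommGroup E] [Lattice E] [IsOrderedAddMonoid E] [HasSolidNorm E] [NormedSpace ℝ E]
    (A : Set E) : Prop :=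
  IsBounded A ∧ ∀ x : ℕ → E, (∀ n, x n ∈ SolidHull A) → DisjointSeq x → WeaklyNull x

/-- An operator is DW-compact if it maps disjointly weakly compact sets onto relatively
norm compact sets. -/
def DWCompact {E X : Type*} [NormedAddCommGroup E] [Lattice E] [IsOrderedAddMonoid E] [HasSolidNorm E] [NormedSpace ℝ E]
    [NormedAddCommGroup X] [NormedSpace ℝ X] (T : E →L[ℝ] X) : Prop :=
  ∀ A : Set E, DisjointlyWeaklyCompact A → IsCompact (closure (T '' A))

/-- A compact operator maps the closed unit ball onto a relatively norm compact set. -/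
def CompactOp {X Y : Type*} [NormedAddCommGroup X] [NormedSpace ℝ X]
    [NormedAddCommGroup Y] [NormedSpace ℝ Y] (T : X →L[ℝ] Y) : Prop :=
  IsCompact (closure (T '' closedBall 0 1))

/-- A set is relatively weakly compact if its closure in the weak topology is compact. -/
def RelWeaklyCompact {X : Type*} [NormedAddCommGroup X] [NormedSpace ℝ X] (A : Set X) : Prop :=
  IsCompact (closure (toWeakSpace ℝ X '' A))

/-- A weakly compact operator maps the closed unit ball onto a relatively weakly compact set. -/
def WeaklyCompactOp {X Y : Type*} [NormedAddCommGroup X] [NormedSpace ℝ X]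
    [NormedAddCommGroup Y] [NormedSpace ℝ Y] (T : X →L[ℝ] Y) : Prop :=
  RelWeaklyCompact (T '' closedBall 0 1)

/-- A Dunford-Pettis operator sends weakly null sequences to norm null sequences. -/
def DunfordPettisOp {X Y : Type*} [NormedAddCommGroup X] [NormedSpace ℝ X]
    [NormedAddCommGroup Y] [NormedSpace ℝ Y] (T : X →L[ℝ] Y) : Prop :=
  ∀ x : ℕ → X, WeaklyNull x → Tendsto (fun n => ‖T (x n)‖) atTop (𝓝 0)

/-- An almost Dunford-Pettis operator sends disjoint weakly null sequences to norm null
sequences. -/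
def AlmostDunfordPettisOp {E X : Type*} [NormedAddCommGroup E] [Lattice E] [IsOrderedAddMonoid E] [HasSolidNorm E] [NormedSpace ℝ E]
    [NormedAddCommGroup X] [NormedSpace ℝ X] (T : E →L[ℝ] X) : Prop :=
  ∀ x : ℕ → E, DisjointSeq x → WeaklyNull x → Tendsto (fun n => ‖T (x n)‖) atTop (𝓝 0)

/-- An AM-compact operator maps order intervals `[-u, u]` onto relatively norm compact sets. -/
def AMCompact {E X : Type*} [NormedAddCommGroup E] [Lattice E] [IsOrderedAddMonoid E] [HasSolidNorm E] [NormedSpace ℝ E]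
    [NormedAddCommGroup X] [NormedSpace ℝ X] (T : E →L[ℝ] X) : Prop :=
  ∀ u : E, 0 ≤ u → IsCompact (closure (T '' Set.Icc (-u) u))

/-- A disjointly weakly compact operator maps the closed unit ball onto a disjointly weakly
compact set. -/
def DisjointlyWeaklyCompactOp {Y E : Type*} [NormedAddCommGroup Y] [NormedSpace ℝ Y]
    [NormedAddCommGroup E] [Lattice E] [IsOrderedAddMonoid E] [HasSolidNorm E] [NormedSpace ℝ E] (S : Y →L[ℝ] E) : Prop :=
  DisjointlyWeaklyCompact (S '' closedBall 0 1)

/-- A norm bounded set `A` is L-weakly compact if every disjoint sequence in the solid hull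
of `A` is norm null. -/
def LWeaklyCompactSet {E : Type*} [NormedAddCommGroup E] [Lattice E] [IsOrderedAddMonoid E] [HasSolidNorm E] [NormedSpace ℝ E]
    (A : Set E) : Prop :=
  IsBounded A ∧ ∀ x : ℕ → E, (∀ n, x n ∈ SolidHull A) → DisjointSeq x →
    Tendsto (fun n => ‖x n‖) atTop (𝓝 0)

/-- An LW-compact operator maps L-weakly compact sets onto relatively norm compact sets. -/
def LWCompact {E X : Type*} [NormedAddCommGroup E] [Lattice E] [IsOrderedAddMonoid E] [HasSolidNorm E] [NormedSpace ℝ E]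
    [NormedAddCommGroup X] [NormedSpace ℝ X] (T : E →L[ℝ] X) : Prop :=
  ∀ A : Set E, LWeaklyCompactSet A → IsCompact (closure (T '' A))

/-- Schur property: every weakly null sequence is norm null. -/
def SchurProp (X : Type*) [NormedAddCommGroup X] [NormedSpace ℝ X] : Prop :=
  ∀ x : ℕ → X, WeaklyNull x → Tendsto (fun n => ‖x n‖) atTop (𝓝 0)

/-- Positive Schur property: every disjoint weakly null sequence is norm null. -/
def PositiveSchurProp (E : Type*) [NormedAddCommGroup E] [Lattice E] [IsOrderedAddMonoid E] [HasSolidNorm E] [NormedSpace ℝ E] : Prop :=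
  ∀ x : ℕ → E, DisjointSeq x → WeaklyNull x → Tendsto (fun n => ‖x n‖) atTop (𝓝 0)

/-- A set is weakly precompact if every sequence in it admits a weakly Cauchy subsequence. -/
def WeaklyPrecompact {X : Type*} [NormedAddCommGroup X] [NormedSpace ℝ X] (A : Set X) : Prop :=
  ∀ x : ℕ → X, (∀ n, x n ∈ A) → ∃ φ : ℕ → ℕ, StrictMono φ ∧
    ∀ f : X →L[ℝ] ℝ, ∃ l : ℝ, Tendsto (fun n => f (x (φ n))) atTop (𝓝 l)

/-- `posDualAbs f x`, for `x ≥ 0`, is `|f|(x) = sup {f u : |u| ≤ x}` (Riesz–Kantorovich). -/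
noncomputable def posDualAbs {E : Type*} [NormedAddCommGroup E] [Lattice E] [IsOrderedAddMonoid E] [HasSolidNorm E] [NormedSpace ℝ E]
    (f : E →L[ℝ] ℝ) (x : E) : ℝ :=
  sSup (f '' {u : E | |u| ≤ x})

/-- `dualAbs f x = |f| x` is the modulus of the functional `f` evaluated at `x`. -/
noncomputable def dualAbs {E : Type*} [NormedAddCommGroup E] [Lattice E] [IsOrderedAddMonoid E] [HasSolidNorm E] [NormedSpace ℝ E]
    (f : E →L[ℝ] ℝ) (x : E) : ℝ :=
  posDualAbs f x⁺ - posDualAbs f x⁻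

/-- A set `A` is `|σ|(E,E′)`-totally bounded: for every `ε > 0` and finite family of
functionals there is a finite subset `Φ` of `A` with
`A ⊆ Φ + ⋂ᵢ {x : |fᵢ|(|x|) < ε}`. -/
def AbsWeakTotallyBounded {E : Type*} [NormedAddCommGroup E] [Lattice E] [IsOrderedAddMonoid E] [HasSolidNorm E] [NormedSpace ℝ E]
    (A : Set E) : Prop :=
  ∀ ε : ℝ, 0 < ε → ∀ S : Finset (E →L[ℝ] ℝ),
    ∃ Φ : Finset E, ↑Φ ⊆ A ∧ ∀ a ∈ A, ∃ y ∈ Φ, ∀ f ∈ S, posDualAbs f |a - y| < ε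

/-- The canonical order on the dual of a Banach lattice: `f ≤ g` iff `f x ≤ g x` for
all `x ≥ 0`. -/
def DualLe {E : Type*} [NormedAddCommGroup E] [Lattice E] [IsOrderedAddMonoid E] [HasSolidNorm E] [NormedSpace ℝ E]
    (f g : E →L[ℝ] ℝ) : Prop :=
  ∀ x : E, 0 ≤ x → f x ≤ g x

/-- The norm of the dual `E′` is order continuous: `‖f i‖ → 0` for every net `(f i)` in `E′`
decreasing to `0` (in the canonical dual order). -/
def DualOrderContinuousNorm (E : Type*) [NormedAddCommGroup E] [Lattice E] [IsOrderedAddMonoid E] [HasSolidNorm E] [NormedSpace ℝ E] :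
    Prop :=
  ∀ (ι : Type) (_ : Preorder ι), IsDirected ι (· ≤ ·) → Nonempty ι →
    ∀ f : ι → E →L[ℝ] ℝ,
      (∀ i j, i ≤ j → DualLe (f j) (f i)) →
      (∀ i, DualLe 0 (f i)) →
      (∀ g : E →L[ℝ] ℝ, (∀ i, DualLe g (f i)) → DualLe g 0) →
      Tendsto (fun i => ‖f i‖) atTop (𝓝 0)

/-- The norm of a Banach lattice is order continuous: `‖y i‖ → 0` for every net `(y i)`
decreasing to `0`. -/
def OrderContinuousNorm (E : Type*) [NormedAddCommGroup E] [Lattice E] [IsOrderedAddMonoid E] [HasSolidNorm E] : Prop :=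
  ∀ (ι : Type) (_ : Preorder ι), IsDirected ι (· ≤ ·) → Nonempty ι →
    ∀ y : ι → E, Antitone y → IsGLB (Set.range y) 0 →
      Tendsto (fun i => ‖y i‖) atTop (𝓝 0)

/-- An order bounded operator maps order intervals into order bounded sets. -/
def OrderBoundedOp {E F : Type*} [NormedAddCommGroup E] [Lattice E] [IsOrderedAddMonoid E] [HasSolidNorm E] [NormedSpace ℝ E]
    [NormedAddCommGroup F] [Lattice F] [IsOrderedAddMonoid F] [HasSolidNorm F] [NormedSpace ℝ F] (T : E →L[ℝ] F) : Prop :=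
  ∀ x : E, 0 ≤ x → ∃ y : F, ∀ u : E, |u| ≤ x → |T u| ≤ y

/-- A positive operator maps the positive cone into the positive cone. -/
def PositiveOp {E F : Type*} [NormedAddCommGroup E] [Lattice E] [IsOrderedAddMonoid E] [HasSolidNorm E] [NormedSpace ℝ E]
    [NormedAddCommGroup F] [Lattice F] [IsOrderedAddMonoid F] [HasSolidNorm F] [NormedSpace ℝ F] (T : E →L[ℝ] F) : Prop :=
  ∀ x : E, 0 ≤ x → 0 ≤ T x

/-- An order weakly compact operator maps order intervals `[0, u]` onto relatively weakly
compact sets. -/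
def OrderWeaklyCompactOp {F X : Type*} [NormedAddCommGroup F] [Lattice F] [IsOrderedAddMonoid F] [HasSolidNorm F] [NormedSpace ℝ F]
    [NormedAddCommGroup X] [NormedSpace ℝ X] (T : F →L[ℝ] X) : Prop :=
  ∀ u : F, 0 ≤ u → RelWeaklyCompact (T '' Set.Icc 0 u)

/-- A bounded set is limited if every weak*-null sequence of functionals converges to zero
uniformly on it. -/
def IsLimitedSet {X : Type*} [NormedAddCommGroup X] [NormedSpace ℝ X] (A : Set X) : Prop :=
  ∀ f : ℕ → X →L[ℝ] ℝ, (∀ x : X, Tendsto (fun n => f n x) atTop (𝓝 0)) →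
    TendstoUniformlyOn (fun n x => f n x) 0 atTop A

/-- A bounded set is a Dunford-Pettis set if every weakly null sequence of functionals
converges to zero uniformly on it. -/
def IsDPSet {X : Type*} [NormedAddCommGroup X] [NormedSpace ℝ X] (A : Set X) : Prop :=
  ∀ f : ℕ → X →L[ℝ] ℝ, WeaklyNull f → TendstoUniformlyOn (fun n x => f n x) 0 atTop A

/-- A Banach lattice has the (d)-DP* property if every disjointly weakly compact set is
limited. -/
def dDPstarProp (E : Type*) [NormedAddCommGroup E] [Lattice E] [IsOrderedAddMonoid E] [HasSolidNorm E] [NormedSpace ℝ E] : Prop :=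
  ∀ A : Set E, DisjointlyWeaklyCompact A → IsLimitedSet A

/-- A Banach lattice has the (d)-DP property if every disjointly weakly compact set is a
Dunford-Pettis set. -/
def dDPProp (E : Type*) [NormedAddCommGroup E] [Lattice E] [IsOrderedAddMonoid E] [HasSolidNorm E] [NormedSpace ℝ E] : Prop :=
  ∀ A : Set E, DisjointlyWeaklyCompact A → IsDPSet A

/-- A Banach space has the Dunford-Pettis property if every relatively weakly compact set
is a Dunford-Pettis set. -/
def DunfordPettisProp (X : Type*) [NormedAddCommGroup X] [NormedSpace ℝ X] : Prop :=
  ∀ A : Set X, RelWeaklyCompact A → IsDPSet A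

/-- A Banach space is a Gelfand-Phillips space if every (bounded) limited set is relatively
norm compact. -/
def GelfandPhillips (X : Type*) [NormedAddCommGroup X] [NormedSpace ℝ X] : Prop :=
  ∀ A : Set X, IsBounded A → IsLimitedSet A → IsCompact (closure A)

/-- A sequence of functionals is an L-sequence if `{f n}` is an L-set: it converges to zero
uniformly (in `n`) along every weakly null sequence of the space. -/
def IsLSequence {X : Type*} [NormedAddCommGroup X] [NormedSpace ℝ X]
    (f : ℕ → X →L[ℝ] ℝ) : Prop :=
  ∀ x : ℕ → X, WeaklyNull x →
    ∀ ε : ℝ, 0 < ε → ∃ M : ℕ, ∀ m ≥ M, ∀ n : ℕ, |f n (x m)| < ε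

/-- σ-Dedekind complete: every nonempty countable order bounded set has a supremum. -/
def SigmaDedekindComplete (E : Type*) [NormedAddCommGroup E] [Lattice E] [IsOrderedAddMonoid E] [HasSolidNorm E] : Prop :=
  ∀ A : Set E, A.Countable → A.Nonempty → BddBelow A → BddAbove A → ∃ s, IsLUB A s

/-- KB-space: every increasing norm bounded sequence in the positive cone is norm
convergent. -/
def KBSpace (E : Type*) [NormedAddCommGroup E] [Lattice E] [IsOrderedAddMonoid E] [HasSolidNorm E] : Prop :=
  ∀ x : ℕ → E, (∀ n, 0 ≤ x n) → Monotone x → (∃ C : ℝ, ∀ n, ‖x n‖ ≤ C) →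
    ∃ y : E, Tendsto x atTop (𝓝 y)

/-! In a reflexive Banach lattice the closed unit ball is disjointly weakly compact: a weak
cluster point of a bounded disjoint sequence is disjoint from every term, hence from itself. Under
the (d)-DP property the ball is therefore a Dunford–Pettis set, which says that the dual `E′` has
the Schur property. `E′` is reflexive too, so its bounded sequences have weakly convergent
subsequences; in infinite dimension, applied to a `1`-separated sequence from Riesz's lemma, this
produces a weakly null sequence that is not norm null. Conversely, in finite dimension weakly null
functionals are norm null, hence uniformly null on bounded sets. -/

theorem exists_strictMono_forall_tendsto {v : ℕ → ℕ → ℝ} {B : ℕ → ℝ}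
    (hv : ∀ n m, |v n m| ≤ B m) :
    ∃ φ : ℕ → ℕ, StrictMono φ ∧ ∀ m, ∃ L, Tendsto (fun k => v (φ k) m) atTop (𝓝 L) := by
  obtain ⟨L, -, φ, hφ, hL⟩ := (isCompact_univ_pi fun m => isCompact_Icc (a := -B m) (b := B m))
    |>.tendsto_subseq (x := v) fun n m _ => abs_le.1 (hv n m)
  exact ⟨φ, hφ, fun m => ⟨L m, tendsto_pi_nhds.1 hL m⟩⟩

section LatticeOrderedGroup

variable {α : Type*} [Lattice α] [AddCommGroup α] [IsOrderedAddMonoid α]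

theorem nonneg_of_two_pow_nsmul_nonneg {a : α} : ∀ {k : ℕ}, 0 ≤ 2 ^ k • a → 0 ≤ a
  | 0, h => by simpa using h
  | k + 1, h => nsmul_two_semiclosed <| nonneg_of_two_pow_nsmul_nonneg (k := k) <| by
      rwa [pow_succ, mul_nsmul'] at h

theorem inf_add_le_inf_add_inf {u a b : α} (hu : 0 ≤ u) (ha : 0 ≤ a) (hb : 0 ≤ b) :
    u ⊓ (a + b) ≤ u ⊓ a + u ⊓ b := by
  rw [← sub_le_iff_le_add', sub_eq_add_neg, neg_inf, add_sup, ← sub_eq_add_neg, ← sub_eq_add_neg]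
  refine sup_le ?_ ?_
  · calc u ⊓ (a + b) - u ≤ 0 := sub_nonpos.2 inf_le_left
      _ ≤ u ⊓ b := le_inf hu hb
  · calc u ⊓ (a + b) - a ≤ (u + a) ⊓ (a + b) - a := by gcongr; exact le_add_of_nonneg_right ha
      _ = u ⊓ b := by rw [add_comm a b, ← inf_add, add_sub_cancel_right]

end LatticeOrderedGroup

section ClosedPositiveCone

variable {E : Type*} [Lattice E] [AddCommGroup E] [IsOrderedAddMonoid E] [Module ℝ E]
  [TopologicalSpace E] [ClosedIciTopology E] [ContinuousSMul ℝ E]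

/-- Approximate `r ≥ 0` from above by `⌈2ᵏ r⌉ / 2ᵏ`: in a lattice-ordered group `0 ≤ 2ᵏ • b`
forces `0 ≤ b`, and the positive cone is closed. -/
theorem posSMulMono_of_closedIciTopology : PosSMulMono ℝ E := by
  refine PosSMulMono.of_smul_nonneg fun r hr a ha => ?_
  set c : ℕ → ℝ := fun k => ⌈r * 2 ^ k⌉₊ / 2 ^ k
  have hc_nonneg : ∀ k, 0 ≤ c k • a := fun k => nonneg_of_two_pow_nsmul_nonneg (k := k) <| by
    rw [← Nat.cast_smul_eq_nsmul ℝ, smul_smul, Nat.cast_pow, Nat.cast_ofNat,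
      mul_div_cancel₀ _ (by positivity), Nat.cast_smul_eq_nsmul]
    exact nsmul_nonneg ha _
  have hc : Tendsto c atTop (𝓝 r) := by
    have hupper : Tendsto (fun k : ℕ => r + (2 ^ k)⁻¹) atTop (𝓝 r) := by
      simpa using tendsto_const_nhds.add (tendsto_inv_atTop_zero.comp
        (tendsto_pow_atTop_atTop_of_one_lt (one_lt_two : (1 : ℝ) < 2)))
    refine tendsto_of_tendsto_of_tendsto_of_le_of_le tendsto_const_nhds hupper
      (fun k => ?_) (fun k => ?_)
    · simpa only [c, le_div_iff₀ (by positivity : (0:ℝ) < 2 ^ k)] using Nat.le_ceil (r * 2 ^ k)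
    · simp only [c]
      rw [div_le_iff₀ (by positivity), add_mul, inv_mul_cancel₀ (by positivity)]
      exact (Nat.ceil_lt_add_one (by positivity)).le
  simpa using isClosed_Ici.mem_of_tendsto (hc.smul_const a) (Eventually.of_forall hc_nonneg)

end ClosedPositiveCone

section NormedLattice

variable {E : Type*} [NormedAddCommGroup E] [Lattice E] [IsOrderedAddMonoid E] [HasSolidNorm E]

theorem isClosed_setOf_abs_inf_eq_zero (w : E) : IsClosed {y : E | |y| ⊓ w = 0} :=
  isClosed_eq ((continuous_id.sup continuous_neg).inf continuous_const) continuous_const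

variable [NormedSpace ℝ E]

theorem abs_smul_le_abs {t : ℝ} (ht₀ : 0 ≤ t) (ht₁ : t ≤ 1) (y : E) : |t • y| ≤ |y| := by
  have := posSMulMono_of_closedIciTopology (E := E)
  have hty : t • |y| ≤ |y| := by
    simpa [sub_smul] using smul_nonneg (sub_nonneg.2 ht₁) (abs_nonneg y)
  refine abs_le'.2 ⟨?_, ?_⟩
  · exact (smul_le_smul_of_nonneg_left (le_abs_self y) ht₀).trans hty
  · rw [← smul_neg]
    exact (smul_le_smul_of_nonneg_left (neg_le_abs y) ht₀).trans hty

theorem convex_setOf_abs_inf_eq_zero {w : E} (hw : 0 ≤ w) :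
    Convex ℝ {y : E | |y| ⊓ w = 0} := by
  intro y hy z hz s t hs ht hst
  simp only [Set.mem_ofPred_eq] at hy hz ⊢
  refine le_antisymm ?_ (le_inf (abs_nonneg _) hw)
  calc |s • y + t • z| ⊓ w ≤ (|y| + |z|) ⊓ w :=
        inf_le_inf_right _ <| (abs_add_le _ _).trans <|
          add_le_add (abs_smul_le_abs hs (by linarith) y) (abs_smul_le_abs ht (by linarith) z)
    _ ≤ w ⊓ |y| + w ⊓ |z| := by
        rw [inf_comm]
        exact inf_add_le_inf_add_inf hw (abs_nonneg y) (abs_nonneg z)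
    _ = 0 := by rw [inf_comm w, inf_comm w, hy, hz, add_zero]

end NormedLattice

section WeakTopology

open TopologicalSpace

variable {X : Type*} [NormedAddCommGroup X] [NormedSpace ℝ X]

theorem Filter.Tendsto.apply_of_toWeakSpace {ι : Type*} {l : Filter ι} {x : ι → X} {w : X}
    (h : Tendsto (toWeakSpace ℝ X ∘ x) l (𝓝 (toWeakSpace ℝ X w))) (f : X →L[ℝ] ℝ) :
    Tendsto (fun n => f (x n)) l (𝓝 (f w)) :=
  ((WeakBilin.eval_continuous _ f).tendsto _).comp h

theorem MapClusterPt.apply_of_toWeakSpace {ι : Type*} {l : Filter ι} {x : ι → X} {a : X}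
    (h : MapClusterPt (toWeakSpace ℝ X a) l (toWeakSpace ℝ X ∘ x)) (f : X →L[ℝ] ℝ) :
    MapClusterPt (f a) l (fun n => f (x n)) :=
  h.continuousAt_comp (f := fun y => f ((toWeakSpace ℝ X).symm y))
    (WeakBilin.eval_continuous _ f).continuousAt

theorem mem_of_mapClusterPt_toWeakSpace {ι : Type*} {l : Filter ι} {x : ι → X} {s : Set X}
    (hs : Convex ℝ s) (hsc : IsClosed s) (hx : ∀ᶠ n in l, x n ∈ s) {a : X}
    (ha : MapClusterPt (toWeakSpace ℝ X a) l (toWeakSpace ℝ X ∘ x)) : a ∈ s := by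
  have hweak : IsClosed (toWeakSpace ℝ X '' s) := by
    rw [← hsc.closure_eq, hs.toWeakSpace_closure ℝ]
    exact isClosed_closure
  obtain ⟨b, hb, hba⟩ := hweak.mem_of_mapClusterPt ha (hx.mono fun n hn => ⟨x n, hn, rfl⟩)
  exact (toWeakSpace ℝ X).injective hba ▸ hb

theorem isCompact_closure_image_toWeakSpace (hX : Function.Surjective (inclusionInDoubleDual ℝ X))
    {s : Set X} (hs : IsBounded s) : IsCompact (closure (toWeakSpace ℝ X '' s)) := by
  refine isCompact_closure_of_isBounded ℝ X _
    (by rwa [(toWeakSpace ℝ X).injective.preimage_image]) fun ψ _ => ?_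
  obtain ⟨x, hx⟩ := hX (WeakDual.toStrongDual ψ)
  exact ⟨toWeakSpace ℝ X x, congrArg StrongDual.toWeakDual hx⟩

theorem exists_mapClusterPt_toWeakSpace (hX : Function.Surjective (inclusionInDoubleDual ℝ X))
    {x : ℕ → X} (hx : IsBounded (Set.range x)) :
    ∃ a : X, MapClusterPt (toWeakSpace ℝ X a) atTop (toWeakSpace ℝ X ∘ x) := by
  obtain ⟨b, -, hb⟩ := (isCompact_closure_image_toWeakSpace hX hx).exists_mapClusterPt
    (u := toWeakSpace ℝ X ∘ x) (f := atTop)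
    (le_principal_iff.2 <| mem_map.2 <| Eventually.of_forall fun n =>
      subset_closure ⟨x n, ⟨n, rfl⟩, rfl⟩)
  exact ⟨(toWeakSpace ℝ X).symm b, by simpa using hb⟩

theorem tendsto_toWeakSpace_of_forall_mapClusterPt_eq
    (hX : Function.Surjective (inclusionInDoubleDual ℝ X)) {x : ℕ → X}
    (hx : IsBounded (Set.range x)) {w : X}
    (h : ∀ a, MapClusterPt (toWeakSpace ℝ X a) atTop (toWeakSpace ℝ X ∘ x) → a = w) :
    Tendsto (toWeakSpace ℝ X ∘ x) atTop (𝓝 (toWeakSpace ℝ X w)) :=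
  (isCompact_closure_image_toWeakSpace hX hx).tendsto_nhds_of_unique_mapClusterPt
    (Eventually.of_forall fun n => subset_closure ⟨x n, ⟨n, rfl⟩, rfl⟩) fun b _ hb => by
      simpa using congrArg (toWeakSpace ℝ X) (h ((toWeakSpace ℝ X).symm b) (by simpa using hb))

theorem TopologicalSpace.IsSeparable.exists_strongDual_seq_separating {s : Set X}
    (hs : IsSeparable s) :
    ∃ g : ℕ → StrongDual ℝ X, ∀ z ∈ s, (∀ m, g m z = 0) → z = 0 := by
  obtain ⟨c, hc, hsc⟩ := hs
  obtain ⟨d, hd⟩ := (hc.insert 0).exists_eq_range (Set.insert_nonempty 0 c)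
  choose g hg_norm hg_d using fun m => exists_dual_vector'' ℝ (d m)
  refine ⟨g, fun z hz hgz => ?_⟩
  by_contra hz0
  have hpos : 0 < ‖z‖ := norm_pos_iff.2 hz0
  obtain ⟨-, ⟨m, rfl⟩, hm⟩ := Metric.mem_closure_iff.1
    (closure_mono ((Set.subset_insert 0 c).trans hd.subset) (hsc hz)) (‖z‖ / 2) (half_pos hpos)
  have hdm : ‖d m‖ ≤ ‖z - d m‖ := by
    calc ‖d m‖ = g m (d m - z) := by simp [hg_d m, hgz m]
      _ ≤ ‖g m‖ * ‖d m - z‖ := (le_abs_self _).trans ((g m).le_opNorm _)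
      _ ≤ ‖z - d m‖ := by
        rw [norm_sub_rev]
        exact mul_le_of_le_one_left (norm_nonneg _) (hg_norm m)
  rw [dist_eq_norm] at hm
  linarith [norm_le_insert' z (d m), norm_sub_rev z (d m)]

/-- Eberlein–Šmulian for reflexive spaces. The closed span `Z` of the sequence is separable, so
countably many functionals separate its points; a diagonal subsequence makes all of them converge,
and then any two weak cluster points, both in `Z`, coincide. -/
theorem exists_subseq_tendsto_toWeakSpace (hX : Function.Surjective (inclusionInDoubleDual ℝ X))
    {x : ℕ → X} (hx : IsBounded (Set.range x)) :
    ∃ φ : ℕ → ℕ, StrictMono φ ∧ ∃ w : X,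
      Tendsto (toWeakSpace ℝ X ∘ x ∘ φ) atTop (𝓝 (toWeakSpace ℝ X w)) := by
  set Z := (Submodule.span ℝ (Set.range x)).topologicalClosure
  have hZ : IsSeparable (Z : Set X) := by
    rw [Submodule.topologicalClosure_coe]
    exact (Set.countable_range x).isSeparable.span.closure
  have hxZ : ∀ n, x n ∈ Z := fun n =>
    Submodule.le_topologicalClosure _ (Submodule.subset_span ⟨n, rfl⟩)
  obtain ⟨g, hg⟩ := hZ.exists_strongDual_seq_separating
  obtain ⟨C, hC⟩ := isBounded_iff_forall_norm_le.1 hx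
  obtain ⟨φ, hφ, hlim⟩ := exists_strictMono_forall_tendsto (v := fun n m => g m (x n))
    (B := fun m => ‖g m‖ * C) fun n m =>
      ((g m).le_opNorm _).trans (by gcongr; exact hC _ ⟨n, rfl⟩)
  choose L hL using hlim
  have hxφ : IsBounded (Set.range (x ∘ φ)) := hx.subset (Set.range_comp_subset_range φ x)
  have hcluster : ∀ a, MapClusterPt (toWeakSpace ℝ X a) atTop (toWeakSpace ℝ X ∘ x ∘ φ) →
      a ∈ Z ∧ ∀ m, g m a = L m := fun a ha =>
    ⟨mem_of_mapClusterPt_toWeakSpace Z.convex (Submodule.isClosed_topologicalClosure _)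
        (Eventually.of_forall fun k => hxZ (φ k)) ha,
      fun m => eq_of_nhds_neBot ((ha.apply_of_toWeakSpace (g m)).clusterPt.mono (hL m))⟩
  obtain ⟨w, hw⟩ := exists_mapClusterPt_toWeakSpace hX hxφ
  refine ⟨φ, hφ, w, tendsto_toWeakSpace_of_forall_mapClusterPt_eq hX hxφ fun a ha => ?_⟩
  obtain ⟨haZ, hag⟩ := hcluster a ha
  obtain ⟨hwZ, hwg⟩ := hcluster w hw
  exact sub_eq_zero.1 <| hg _ (Z.sub_mem haZ hwZ) fun m => by rw [map_sub, hag, hwg, sub_self]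

theorem surjective_inclusionInDoubleDual_strongDual
    (hX : Function.Surjective (inclusionInDoubleDual ℝ X)) :
    Function.Surjective (inclusionInDoubleDual ℝ (StrongDual ℝ X)) := fun Φ =>
  ⟨Φ.comp (inclusionInDoubleDual ℝ X), ContinuousLinearMap.ext fun ψ => by
    obtain ⟨x, rfl⟩ := hX ψ
    rfl⟩

theorem finiteDimensional_of_schurProp (hX : Function.Surjective (inclusionInDoubleDual ℝ X))
    (h : SchurProp X) : FiniteDimensional ℝ X := by
  by_contra hfin
  obtain ⟨R, x, -, hxR, hsep⟩ := exists_seq_norm_le_one_le_norm_sub hfin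
  obtain ⟨φ, hφ, w, hw⟩ := exists_subseq_tendsto_toWeakSpace hX
    (isBounded_iff_forall_norm_le.2 ⟨R, by rintro _ ⟨n, rfl⟩; exact hxR n⟩)
  have hnorm : Tendsto (x ∘ φ) atTop (𝓝 w) := tendsto_iff_norm_sub_tendsto_zero.2 <|
    h _ fun f => by simpa using (hw.apply_of_toWeakSpace f).sub_const (f w)
  obtain ⟨N, hN⟩ := Metric.cauchySeq_iff'.1 hnorm.cauchySeq 1 one_pos
  have hclose := hN (N + 1) (by omega)
  rw [dist_eq_norm] at hclose
  exact (hsep (hφ.injective.ne (by omega : N + 1 ≠ N))).not_gt hclose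

end WeakTopology

section DunfordPettis

variable {X : Type*} [NormedAddCommGroup X] [NormedSpace ℝ X]

theorem schurProp_of_finiteDimensional [FiniteDimensional ℝ X] : SchurProp X := fun x hx => by
  let e := (Module.finBasis ℝ X).equivFunL
  have hcoord : Tendsto (fun n => e (x n)) atTop (𝓝 (e 0)) := by
    rw [map_zero]
    refine tendsto_pi_nhds.2 fun i => ?_
    exact hx ((ContinuousLinearMap.proj (R := ℝ) (φ := fun _ => ℝ) i).comp
      e.toContinuousLinearMap)
  simpa using ((e.symm.continuous.tendsto _).comp hcoord).norm

theorem schurProp_strongDual_of_isDPSet_closedBall (h : IsDPSet (closedBall (0 : X) 1)) :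
    SchurProp (X →L[ℝ] ℝ) := fun f hf => by
  refine Metric.tendsto_nhds.2 fun ε hε => ?_
  filter_upwards [Metric.tendstoUniformlyOn_iff.1 (h f hf) (ε / 2) (half_pos hε)] with n hn
  have : ‖f n‖ ≤ ε / 2 := (f n).opNorm_le_of_unit_norm (half_pos hε).le fun x hx => by
    simpa [dist_comm] using (hn x (by simp [hx])).le
  rw [dist_zero_right, norm_norm]
  linarith

theorem isDPSet_of_schurProp_strongDual (h : SchurProp (X →L[ℝ] ℝ)) {A : Set X}
    (hA : IsBounded A) : IsDPSet A := by
  intro f hf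
  obtain ⟨C, hC⟩ := isBounded_iff_forall_norm_le.1 hA
  refine Metric.tendstoUniformlyOn_iff.2 fun ε hε => ?_
  filter_upwards [Metric.tendsto_nhds.1 (h f hf) (ε / (|C| + 1)) (by positivity)] with n hn x hx
  rw [dist_zero_right, norm_norm] at hn
  calc dist (0 : ℝ) (f n x) ≤ ‖f n‖ * ‖x‖ := by simpa [dist_comm] using (f n).le_opNorm x
    _ ≤ ‖f n‖ * (|C| + 1) := by
        gcongr
        linarith [hC x hx, le_abs_self C]
    _ < ε / (|C| + 1) * (|C| + 1) := by gcongr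
    _ = ε := div_mul_cancel₀ _ (by positivity)

end DunfordPettis

section ReflexiveLattice

variable {E : Type*} [NormedAddCommGroup E] [Lattice E] [IsOrderedAddMonoid E] [HasSolidNorm E]
  [NormedSpace ℝ E]

theorem DisjointSeq.weaklyNull (hE : Function.Surjective (inclusionInDoubleDual ℝ E))
    {x : ℕ → E} (hd : DisjointSeq x) (hx : IsBounded (Set.range x)) : WeaklyNull x := by
  have hweak : Tendsto (toWeakSpace ℝ E ∘ x) atTop (𝓝 (toWeakSpace ℝ E 0)) :=
    tendsto_toWeakSpace_of_forall_mapClusterPt_eq hE hx fun a ha => by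
      have hmem : ∀ w : E, (∀ᶠ n in atTop, |x n| ⊓ |w| = 0) → |a| ⊓ |w| = 0 := fun w hw =>
        mem_of_mapClusterPt_toWeakSpace (convex_setOf_abs_inf_eq_zero (abs_nonneg w))
          (isClosed_setOf_abs_inf_eq_zero _) hw ha
      have hak : ∀ k, |a| ⊓ |x k| = 0 := fun k =>
        hmem _ ((eventually_ne_atTop k).mono fun n hn => hd n k hn)
      have haa : |a| ⊓ |a| = 0 :=
        hmem _ (Eventually.of_forall fun n => by rw [inf_comm]; exact hak n)
      rw [inf_idem] at haa
      exact norm_eq_zero.1 (by rw [← norm_abs_eq_norm, haa, norm_zero])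
  intro f
  simpa using hweak.apply_of_toWeakSpace f

theorem disjointlyWeaklyCompact_closedBall (hE : Function.Surjective (inclusionInDoubleDual ℝ E))
    (r : ℝ) : DisjointlyWeaklyCompact (closedBall (0 : E) r) := by
  refine ⟨isBounded_closedBall, fun x hx hd => hd.weaklyNull hE ?_⟩
  refine (isBounded_closedBall (x := (0 : E)) (r := r)).subset
    (Set.range_subset_iff.2 fun n => ?_)
  obtain ⟨y, hy, hxy⟩ := hx n
  rw [mem_closedBall_zero_iff] at hy ⊢
  exact (norm_le_norm_of_abs_le_abs hxy).trans hy

end ReflexiveLattice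

theorem reflexive_dDP_iff_finiteDimensional_general
    {E : Type*} [NormedAddCommGroup E] [Lattice E] [IsOrderedAddMonoid E] [HasSolidNorm E] [NormedSpace ℝ E]
    (hrefl : Function.Surjective (inclusionInDoubleDual ℝ E)) :
    dDPProp E ↔ FiniteDimensional ℝ E := by
  refine ⟨fun hdDP => ?_, fun _ A hA =>
    isDPSet_of_schurProp_strongDual schurProp_of_finiteDimensional hA.1⟩
  have hSchur : SchurProp (E →L[ℝ] ℝ) := schurProp_strongDual_of_isDPSet_closedBall
    (hdDP _ (disjointlyWeaklyCompact_closedBall hrefl 1))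
  have : FiniteDimensional ℝ (E →L[ℝ] ℝ) :=
    finiteDimensional_of_schurProp (surjective_inclusionInDoubleDual_strongDual hrefl) hSchur
  exact FiniteDimensional.of_injective (inclusionInDoubleDualLi ℝ (E := E)).toLinearMap
    (inclusionInDoubleDualLi ℝ).injective

/-- A reflexive Banach lattice has the (d)-DP property iff it is finite
dimensional. -/
theorem reflexive_dDP_iff_finiteDimensional
    {E : Type*} [NormedAddCommGroup E] [Lattice E] [IsOrderedAddMonoid E] [HasSolidNorm E] [NormedSpace ℝ E] [CompleteSpace E]
    (hrefl : Function.Surjective (inclusionInDoubleDual ℝ E)) :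
    dDPProp E ↔ FiniteDimensional ℝ E :=
  reflexive_dDP_iff_finiteDimensional_general hrefl
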